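/- Let n, i₁, i₂ be integers with 1 ≤ i₁, i₂ ≤ n, let d be an integer with 0 ≤ d ≤ min{i₁, i₂}, and let k be an integer with max{0, (i₁+i₂−n)−d} ≤ k ≤ min{i₁, i₂} − d. Define p : {1,…,n} → ℤ by p(j) = j for 1 ≤ j ≤ k; p(j) = j + i₁ − k for k+1 ≤ j ≤ i₂ − d; p(j) = (i₁ + i₂ − d + 1) − j for i₂ − d + 1 ≤ j ≤ i₂; p(j) = j − i₂ + k for i₂ + 1 ≤ j ≤ i₁ + i₂ − d − k; and p(j) = j for i₁ + i₂ − d − k + 1 ≤ j ≤ n. Then p is a well-defined permutation of {1, …, n}. -/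
import Mathlib


/-- The piecewise map p_n(d,k)_{i₁,i₂} of Tadić's structure formula. -/
def tadicPerm (i₁ i₂ d k : ℤ) : ℤ → ℤ := fun j =>
  if j ≤ k then j
  else if j ≤ i₂ - d then j + i₁ - k
  else if j ≤ i₂ then i₁ + i₂ - d + 1 - j
  else if j ≤ i₁ + i₂ - d - k then j - i₂ + k
  else j


private lemma tadicPerm_mapsTo (n i₁ i₂ d k : ℤ)
    (hi₁ : 1 ≤ i₁) (hi₁n : i₁ ≤ n) (hi₂ : 1 ≤ i₂) (hi₂n : i₂ ≤ n)
    (hd0 : 0 ≤ d) (hd : d ≤ min i₁ i₂)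
    (hk0 : max 0 (i₁ + i₂ - n - d) ≤ k) (hk : k ≤ min i₁ i₂ - d) :
    Set.MapsTo (tadicPerm i₁ i₂ d k) (Set.Icc 1 n) (Set.Icc 1 n) := by
  intro j hj
  simp only [Set.mem_Icc] at *
  unfold tadicPerm
  split_ifs <;> omega

private lemma tadicPerm_inv (n i₁ i₂ d k : ℤ)
    (hi₁ : 1 ≤ i₁) (hi₁n : i₁ ≤ n) (hi₂ : 1 ≤ i₂) (hi₂n : i₂ ≤ n)
    (hd0 : 0 ≤ d) (hd : d ≤ min i₁ i₂)
    (hk0 : max 0 (i₁ + i₂ - n - d) ≤ k) (hk : k ≤ min i₁ i₂ - d) :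
    ∀ j ∈ Set.Icc (1:ℤ) n, tadicPerm i₂ i₁ d k (tadicPerm i₁ i₂ d k j) = j := by
  intro j hj
  simp only [Set.mem_Icc] at hj
  unfold tadicPerm
  split_ifs <;> omega

/-- under the stated inequalities, the piecewise map p is well defined
(it obeys each of the five defining clauses on its interval) and is a permutation of
{1,…,n}. -/
theorem tadicPerm_wellDefined (n i₁ i₂ d k : ℤ)
    (hi₁ : 1 ≤ i₁) (hi₁n : i₁ ≤ n) (hi₂ : 1 ≤ i₂) (hi₂n : i₂ ≤ n)
    (hd0 : 0 ≤ d) (hd : d ≤ min i₁ i₂)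
    (hk0 : max 0 (i₁ + i₂ - n - d) ≤ k) (hk : k ≤ min i₁ i₂ - d) :
    (∀ j, 1 ≤ j → j ≤ k → tadicPerm i₁ i₂ d k j = j) ∧
    (∀ j, k + 1 ≤ j → j ≤ i₂ - d → tadicPerm i₁ i₂ d k j = j + i₁ - k) ∧
    (∀ j, i₂ - d + 1 ≤ j → j ≤ i₂ → tadicPerm i₁ i₂ d k j = i₁ + i₂ - d + 1 - j) ∧
    (∀ j, i₂ + 1 ≤ j → j ≤ i₁ + i₂ - d - k → tadicPerm i₁ i₂ d k j = j - i₂ + k) ∧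
    (∀ j, i₁ + i₂ - d - k + 1 ≤ j → j ≤ n → tadicPerm i₁ i₂ d k j = j) ∧
    Set.BijOn (tadicPerm i₁ i₂ d k) (Set.Icc 1 n) (Set.Icc 1 n) := by
  refine ⟨?_, ?_, ?_, ?_, ?_, ?_⟩
  · intro j h1 h2; unfold tadicPerm; split_ifs <;> omega
  · intro j h1 h2; unfold tadicPerm; split_ifs <;> omega
  · intro j h1 h2; unfold tadicPerm; split_ifs <;> omega
  · intro j h1 h2; unfold tadicPerm; split_ifs <;> omega
  · intro j h1 h2; unfold tadicPerm; split_ifs <;> omega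
  · exact Set.InvOn.bijOn
      ⟨tadicPerm_inv n i₁ i₂ d k hi₁ hi₁n hi₂ hi₂n hd0 hd hk0 hk,
       tadicPerm_inv n i₂ i₁ d k hi₂ hi₂n hi₁ hi₁n hd0 (by omega) (by omega) (by omega)⟩
      (tadicPerm_mapsTo n i₁ i₂ d k hi₁ hi₁n hi₂ hi₂n hd0 hd hk0 hk)
      (tadicPerm_mapsTo n i₂ i₁ d k hi₂ hi₂n hi₁ hi₁n hd0 (by omega) (by omega) (by omega))
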